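/- If g₁, …, g_n are independent, mutually commuting Pauli strings on n qubits, then for each index i there exists a Pauli string g ∈ P_n that anticommutes with g_i and commutes with every g_j for j ≠ i. -/

import Mathlib

open Matrix

/-- The Pauli string `X^x Z^z` (phase convention fixed), acting on `n` qubits:
`(X^x Z^z)|b⟩ = (-1)^(z·b) |b + x⟩`. Every `n`-qubit Pauli string is, up to a
global phase, of this form. -/
noncomputable def pauliString (n : ℕ) (x z : Fin n → ZMod 2) :
    Matrix (Fin n → ZMod 2) (Fin n → ZMod 2) ℂ :=
  fun a b => if a = b + x then (-1 : ℂ) ^ (∑ i, (z i * b i).val) else 0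

/-- The binary (symplectic) representation `r(g) = (r_x(g), r_z(g)) ∈ F₂^{2n}`. -/
def pauliRep (n : ℕ) (x z : Fin n → ZMod 2) : Fin n ⊕ Fin n → ZMod 2 :=
  Sum.elim x z

/-- The `2n × 2n` block matrix `Λ = [[0, Iₙ],[Iₙ, 0]]` over `F₂`. -/
def lambdaMat (n : ℕ) : Matrix (Fin n ⊕ Fin n) (Fin n ⊕ Fin n) (ZMod 2) :=
  Matrix.fromBlocks 0 1 1 0

lemma zmod2_neg_one_pow_add (u v : ZMod 2) :
    (-1 : ℂ) ^ (u + v).val = (-1) ^ u.val * (-1) ^ v.val := by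
  have h : ∀ w : ZMod 2, w = 0 ∨ w = 1 := by decide
  have e : (1 + 1 : ZMod 2) = 0 := by decide
  rcases h u with hu | hu <;> rcases h v with hv | hv <;> subst hu <;> subst hv <;>
    simp [e, ZMod.val_zero, ZMod.val_one]

lemma neg_one_pow_sum_val {n : ℕ} (f : Fin n → ZMod 2) :
    (-1 : ℂ) ^ (∑ i, (f i).val) = (-1 : ℂ) ^ ((∑ i, f i) : ZMod 2).val := by
  induction (Finset.univ : Finset (Fin n)) using Finset.cons_induction with
  | empty => simp
  | cons a s ha ih =>
      rw [Finset.sum_cons, Finset.sum_cons, pow_add, ih, zmod2_neg_one_pow_add]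

lemma pauli_mul (n : ℕ) (x z x' z' : Fin n → ZMod 2) :
    pauliString n x z * pauliString n x' z'
      = ((-1 : ℂ) ^ (∑ i, (z i * x' i).val)) •
        pauliString n (x + x') (z + z') := by
  ext a b
  simp only [mul_apply, pauliString, Matrix.smul_apply, smul_eq_mul]
  have hc : ∀ c : Fin n → ZMod 2, (a = c + x) ↔ (c = a + x) := by
    intro c
    constructor <;> rintro rfl <;> funext i <;>
      exact (by decide : ∀ p q : ZMod 2, p = p + q + q) _ _
  rw [Finset.sum_eq_single (a + x)]
  · have key : (a = b + (x + x')) ↔ (a + x = b + x') := by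
      constructor <;> intro h
      · subst h; funext i
        exact (by decide : ∀ p q r : ZMod 2, p + (q + r) + q = p + r) _ _ _
      · have : a = a + x + x := funext fun i =>
          (by decide : ∀ p q : ZMod 2, p = p + q + q) _ _
        rw [this, h]; funext i
        exact (by decide : ∀ p q r : ZMod 2, p + r + q = p + (q + r)) _ _ _
    by_cases hab : a = b + (x + x')
    · have h1 : a + x = b + x' := key.mp hab
      rw [if_pos ((hc (a+x)).mpr rfl), if_pos h1, if_pos hab, h1]
      rw [neg_one_pow_sum_val (fun i => z i * (b + x') i),
          neg_one_pow_sum_val (fun i => z' i * b i), ← zmod2_neg_one_pow_add,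
          neg_one_pow_sum_val (fun i => z i * x' i),
          neg_one_pow_sum_val (fun i => (z + z') i * b i), ← zmod2_neg_one_pow_add]
      congr 2
      rw [← Finset.sum_add_distrib, ← Finset.sum_add_distrib]
      apply Finset.sum_congr rfl
      intro i _
      show z i * (b i + x' i) + z' i * b i = z i * x' i + (z i + z' i) * b i
      ring
    · have h1 : ¬ (a + x = b + x') := fun h => hab (key.mpr h)
      rw [if_pos ((hc (a+x)).mpr rfl), if_neg h1, if_neg hab, mul_zero, mul_zero]
  · intro c _ hc2
    rw [if_neg (fun h => hc2 ((hc c).mp h)), zero_mul]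
  · intro h; exact absurd (Finset.mem_univ _) h

lemma pauli_zero (n : ℕ) : pauliString n 0 0 = 1 := by
  ext a b
  simp [pauliString, one_apply]

lemma prod_pauli (n : ℕ) (x z : Fin n → Fin n → ZMod 2) (a : Fin n → ZMod 2) :
    ∀ l : List (Fin n), ∃ c : ℂ, c ≠ 0 ∧
      (l.map (fun i => pauliString n (x i) (z i) ^ (a i).val)).prod
        = c • pauliString n ((l.map fun i => a i • x i).sum)
            ((l.map fun i => a i • z i).sum)
  | [] => ⟨1, one_ne_zero, by simp [pauli_zero]⟩
  | (i :: t) => by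
      obtain ⟨c, hc, hp⟩ := prod_pauli n x z a t
      rcases (by decide : ∀ w : ZMod 2, w = 0 ∨ w = 1) (a i) with hai | hai
      · refine ⟨c, hc, ?_⟩
        simp only [List.map_cons, List.prod_cons, List.sum_cons, hai, ZMod.val_zero,
          pow_zero, one_mul, zero_smul, zero_add, hp]
      · refine ⟨(-1 : ℂ) ^ (∑ k, (z i k * ((t.map fun i => a i • x i).sum) k).val) * c,
          mul_ne_zero (pow_ne_zero _ (by norm_num)) hc, ?_⟩
        simp only [List.map_cons, List.prod_cons, List.sum_cons, hai, ZMod.val_one,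
          pow_one, one_smul, hp, Matrix.mul_smul, pauli_mul, smul_smul]
        ring_nf

lemma pauli_anticomm (n : ℕ) (x z x' z' : Fin n → ZMod 2)
    (h : (∑ i, z i * x' i) + (∑ i, z' i * x i) = 1) :
    pauliString n x z * pauliString n x' z'
      = -(pauliString n x' z' * pauliString n x z) := by
  rw [pauli_mul, pauli_mul, add_comm x' x, add_comm z' z, ← neg_smul]
  congr 1
  rw [neg_one_pow_sum_val (fun i => z i * x' i), neg_one_pow_sum_val (fun i => z' i * x i)]
  revert h
  generalize (∑ i, z i * x' i : ZMod 2) = u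
  generalize (∑ i, z' i * x i : ZMod 2) = v
  rcases (by decide : ∀ w : ZMod 2, w = 0 ∨ w = 1) u with hu | hu <;>
    rcases (by decide : ∀ w : ZMod 2, w = 0 ∨ w = 1) v with hv | hv <;>
      subst hu <;> subst hv <;> intro h <;> simp_all <;> norm_num [ZMod.val_one]

lemma pauli_comm' (n : ℕ) (x z x' z' : Fin n → ZMod 2)
    (h : (∑ i, z i * x' i) + (∑ i, z' i * x i) = 0) :
    pauliString n x z * pauliString n x' z'
      = pauliString n x' z' * pauliString n x z := by
  rw [pauli_mul, pauli_mul, add_comm x' x, add_comm z' z]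
  congr 1
  rw [neg_one_pow_sum_val (fun i => z i * x' i), neg_one_pow_sum_val (fun i => z' i * x i)]
  revert h
  generalize (∑ i, z i * x' i : ZMod 2) = u
  generalize (∑ i, z' i * x i : ZMod 2) = v
  rcases (by decide : ∀ w : ZMod 2, w = 0 ∨ w = 1) u with hu | hu <;>
    rcases (by decide : ∀ w : ZMod 2, w = 0 ∨ w = 1) v with hv | hv <;>
      subst hu <;> subst hv <;> intro h <;> simp_all


/-- If `g₁, …, g_n` are independent mutually commuting Pauli strings on `n`
qubits, then for each `i` there is a Pauli string `g` that anticommutes with `gᵢ` and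
commutes with every `g_j`, `j ≠ i`. -/
theorem exists_anticommuting_partner (n : ℕ) (x z : Fin n → Fin n → ZMod 2)
    (hcomm : ∀ i j, pauliString n (x i) (z i) * pauliString n (x j) (z j)
      = pauliString n (x j) (z j) * pauliString n (x i) (z i))
    (hindep : ∀ a : Fin n → ZMod 2,
      (∃ c : ℂ, ((List.finRange n).map
          (fun i => (pauliString n (x i) (z i)) ^ (a i).val)).prod
        = c • (1 : Matrix (Fin n → ZMod 2) (Fin n → ZMod 2) ℂ)) → a = 0) :
    ∀ i : Fin n, ∃ x' z' : Fin n → ZMod 2,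
      (pauliString n x' z' * pauliString n (x i) (z i)
        = -(pauliString n (x i) (z i) * pauliString n x' z')) ∧
      ∀ j : Fin n, j ≠ i →
        pauliString n x' z' * pauliString n (x j) (z j)
          = pauliString n (x j) (z j) * pauliString n x' z' := by
  intro i
  set M : Matrix (Fin n) (Fin n ⊕ Fin n) (ZMod 2) :=
    Matrix.of fun j => Sum.elim (x j) (z j) with hM
  have hli : LinearIndependent (ZMod 2) M := by
    refine Fintype.linearIndependent_iff.mpr ?_
    intro g hg
    have hx : (∑ j, g j • x j) = 0 := by
      funext k
      have h1 := congrFun hg (Sum.inl k)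
      simpa [hM, Finset.sum_apply] using h1
    have hz : (∑ j, g j • z j) = 0 := by
      funext k
      have h1 := congrFun hg (Sum.inr k)
      simpa [hM, Finset.sum_apply] using h1
    obtain ⟨c, _, hp⟩ := prod_pauli n x z g (List.finRange n)
    have hg0 : g = 0 := by
      apply hindep
      refine ⟨c, ?_⟩
      rw [hp, ← Fin.sum_univ_def, ← Fin.sum_univ_def, hx, hz, pauli_zero]
    intro j; rw [hg0]; rfl
  have hsurj : Function.Surjective M.mulVec := by
    have hr : M.rank = n := by simpa using hli.rank_matrix
    have hrange : LinearMap.range M.mulVecLin = ⊤ := by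
      apply Submodule.eq_top_of_finrank_eq
      rw [← Matrix.rank, hr]
      simp [Module.finrank_pi]
    intro y
    have hy : y ∈ LinearMap.range M.mulVecLin := hrange ▸ Submodule.mem_top
    obtain ⟨w, hw⟩ := hy
    exact ⟨w, hw⟩
  obtain ⟨w, hw⟩ := hsurj (Pi.single i 1)
  refine ⟨fun k => w (Sum.inr k), fun k => w (Sum.inl k), ?_, ?_⟩
  · apply pauli_anticomm
    have h1 := congrFun hw i
    simp only [hM, Matrix.mulVec, dotProduct, Fintype.sum_sum_type,
      Matrix.of_apply, Sum.elim_inl, Sum.elim_inr, Pi.single_eq_same] at h1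
    have h2 : (∑ k, w (Sum.inl k) * x i k) = ∑ k, x i k * w (Sum.inl k) :=
      Finset.sum_congr rfl fun k _ => mul_comm _ _
    rw [h2]; exact h1
  · intro j hj
    apply pauli_comm'
    have h1 := congrFun hw j
    simp only [hM, Matrix.mulVec, dotProduct, Fintype.sum_sum_type,
      Matrix.of_apply, Sum.elim_inl, Sum.elim_inr] at h1
    rw [Pi.single_eq_of_ne hj] at h1
    have h2 : (∑ k, w (Sum.inl k) * x j k) = ∑ k, x j k * w (Sum.inl k) :=
      Finset.sum_congr rfl fun k _ => mul_comm _ _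
    rw [h2]; exact h1
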